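/- arXiv:2208.07797 — 4 statements merged into one kernel-verified Lean document; each statement's English description precedes it below -/
import Mathlib

section
/- Under the setup where x_i^(k+1) = x_i^(k) − γ Σ_j h_{ij}^(k), h_{ij}^(k) = ∇f_j(x_j^(k)) + ε_{ij}^(k), ‖ε_{ij}^(k)‖ ≤ ε, each f_j is L_j-smooth, all x_i^(0) coincide, and 0 < γ ≤ 1/(Σ_j L_j), define f = Σ_j f_j and h_i^(k) = Σ_j h_{ij}^(k). Then for every agent i and every k ≥ 0, ‖∇f(x_i^(k)) − h_i^(k)‖ ≤ 2εN(k + 1/2). -/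
open Finset

lemma grad_sum {n N : ℕ} (f : Fin N → EuclideanSpace ℝ (Fin n) → ℝ)
    (hdiff : ∀ j, Differentiable ℝ (f j)) (x : EuclideanSpace ℝ (Fin n)) :
    gradient (fun y => ∑ j, f j y) x = ∑ j, gradient (f j) x := by
  simp only [gradient]
  rw [fderiv_fun_sum (fun j _ => (hdiff j).differentiableAt), map_sum]

/-- gradient/measurement gap bound `‖∇f(x_i^(k)) - h_i^(k)‖ ≤ 2εN(k+1/2)`. -/
theorem stmt_1 (n N : ℕ) (f : Fin N → EuclideanSpace ℝ (Fin n) → ℝ)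
    (Lc : Fin N → ℝ) (hLpos : ∀ j, 0 < Lc j)
    (hdiff : ∀ j, Differentiable ℝ (f j))
    (hLip : ∀ j x y, ‖gradient (f j) x - gradient (f j) y‖ ≤ Lc j * ‖x - y‖)
    (γ ε : ℝ) (hγ0 : 0 < γ) (hγ : γ ≤ 1 / ∑ j, Lc j) (hε : 0 ≤ ε)
    (x : Fin N → ℕ → EuclideanSpace ℝ (Fin n))
    (err : Fin N → Fin N → ℕ → EuclideanSpace ℝ (Fin n))
    (herr : ∀ i j k, ‖err i j k‖ ≤ ε)
    (hinit : ∀ i j, x i 0 = x j 0)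
    (hupd : ∀ i k, x i (k + 1)
      = x i k - γ • ∑ j, (gradient (f j) (x j k) + err i j k)) :
    ∀ i k, ‖gradient (fun y => ∑ j, f j y) (x i k)
        - ∑ j, (gradient (f j) (x j k) + err i j k)‖
      ≤ 2 * ε * N * (k + 1 / 2) := by
  have hcons : ∀ i j k, ‖x i k - x j k‖ ≤ 2 * ε * N * γ * k := by
    intro i j k
    induction k with
    | zero => simp [hinit i j]
    | succ k ih =>
      push_cast
      have hs : ∑ m, (err i m k - err j m k)
          = (∑ m, (gradient (f m) (x m k) + err i m k))
            - ∑ m, (gradient (f m) (x m k) + err j m k) := by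
        rw [← Finset.sum_sub_distrib]
        exact Finset.sum_congr rfl fun m _ => by abel
      have h1 : x i (k+1) - x j (k+1)
          = (x i k - x j k) - γ • ∑ m, (err i m k - err j m k) := by
        rw [hupd i k, hupd j k, hs, smul_sub]; abel
      calc ‖x i (k+1) - x j (k+1)‖
          ≤ ‖x i k - x j k‖ + γ * ‖∑ m, (err i m k - err j m k)‖ := by
            rw [h1]
            refine (norm_sub_le _ _).trans ?_
            rw [norm_smul, Real.norm_eq_abs, abs_of_pos hγ0]
        _ ≤ 2 * ε * N * γ * k + γ * (N * (2 * ε)) := by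
            gcongr
            refine (norm_sum_le _ _).trans ?_
            refine (Finset.sum_le_card_nsmul _ _ (2 * ε) ?_).trans ?_
            · intro m _
              refine (norm_sub_le _ _).trans ?_
              linarith [herr i m k, herr j m k]
            · simp [nsmul_eq_mul]
        _ = 2 * ε * N * γ * ((k:ℝ) + 1) := by ring
  intro i k
  rcases Nat.eq_zero_or_pos N with h0 | h0
  · exact absurd i.isLt (by omega)
  rw [grad_sum f hdiff]
  have h2 : (∑ j, gradient (f j) (x i k)) - ∑ j, (gradient (f j) (x j k) + err i j k)
      = ∑ j, (gradient (f j) (x i k) - gradient (f j) (x j k) - err i j k) := by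
    rw [← Finset.sum_sub_distrib]
    apply Finset.sum_congr rfl
    intro j _; abel
  rw [h2]
  have hbound : ∀ j : Fin N, ‖gradient (f j) (x i k) - gradient (f j) (x j k) - err i j k‖
      ≤ Lc j * (2 * ε * N * γ * k) + ε := by
    intro j
    refine (norm_sub_le _ _).trans ?_
    have := hLip j (x i k) (x j k)
    have := hcons i j k
    have := herr i j k
    have hL := (hLpos j).le
    nlinarith [hLip j (x i k) (x j k), hcons i j k]
  calc ‖∑ j, (gradient (f j) (x i k) - gradient (f j) (x j k) - err i j k)‖
      ≤ ∑ j, (Lc j * (2 * ε * N * γ * k) + ε) := by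
        refine (norm_sum_le _ _).trans (Finset.sum_le_sum fun j _ => hbound j)
    _ = (∑ j, Lc j) * (2 * ε * N * γ * k) + N * ε := by
        rw [Finset.sum_add_distrib, ← Finset.sum_mul]; simp [mul_comm]
    _ ≤ 2 * ε * N * (k + 1 / 2) := by
        have hLsum : 0 < ∑ j, Lc j :=
          Finset.sum_pos (fun j _ => hLpos j)
            (by simp [Finset.univ_nonempty_iff, Fin.pos_iff_nonempty.mp h0])
        have hγL : γ * (∑ j, Lc j) ≤ 1 := by
          have := (le_div_iff₀ hLsum).mp hγ; linarith
        nlinarith [mul_nonneg (mul_nonneg (mul_nonneg (by linarith : (0:ℝ) ≤ 2*ε) (Nat.cast_nonneg N)) hγ0.le) (Nat.cast_nonneg k)]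
end

section
/- Let f : R^n → R be L-smooth and ℓ-strongly convex with minimizer x⋆, let 0 < γ ≤ 1/L, let r ∈ (0,1) and r̄ = r/(1−r). Suppose x⁺ = x − γh where the vector h satisfies ‖∇f(x) − h‖ ≤ r̄ ‖∇f(x)‖. Then f(x⁺) − f(x⋆) ≤ (1 + γL r̄² − γℓ)(f(x) − f(x⋆)). -/
/-!
The descent lemma bounds `f (x - γ • h)` by `f x - γ ⟪∇f x, h⟫ + (γL/2) γ ‖h‖²`; since `γL ≤ 1`,
completing the square turns this into `f x - γ/2 ‖∇f x‖² + γ/2 ‖∇f x - h‖²`. The error term is at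
most `γ/2 · r̄² ‖∇f x‖² ≤ γ L r̄² (f x - f x⋆)` by smoothness, and the gain `γ/2 ‖∇f x‖²` is at least
`γ ℓ (f x - f x⋆)` by the Polyak–Łojasiewicz inequality, which follows from strong convexity.
-/

open Set
open ContinuousLinearMap InnerProductSpace
open scoped Gradient RealInnerProductSpace

section NormedSpace

variable {E : Type*} [NormedAddCommGroup E] [NormedSpace ℝ E] {ψ : E → ℝ} {ψ' : E →L[ℝ] ℝ}

lemma ConvexOn.le_sub_of_hasFDerivAt (hψ : ConvexOn ℝ univ ψ) {x : E} (hd : HasFDerivAt ψ ψ' x)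
    (y : E) : ψ' (y - x) ≤ ψ y - ψ x := by
  have hline : ConvexOn ℝ univ (ψ ∘ AffineMap.lineMap (k := ℝ) x y) := by
    simpa using hψ.comp_affineMap (AffineMap.lineMap x y)
  have hd0 : HasDerivAt (ψ ∘ AffineMap.lineMap (k := ℝ) x y) (ψ' (y - x)) 0 :=
    HasFDerivAt.comp_hasDerivAt 0 (by simpa using hd) AffineMap.hasDerivAt_lineMap
  simpa [slope] using hline.le_slope_of_hasDerivAt (mem_univ 0) (mem_univ 1) zero_lt_one hd0

end NormedSpace

section InnerProductSpace

variable {E : Type*} [NormedAddCommGroup E] [InnerProductSpace ℝ E] [CompleteSpace E] {f : E → ℝ}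

lemma StrongConvexOn.inner_gradient_add_le {ℓ : ℝ} (hstrong : StrongConvexOn univ ℓ f) {x : E}
    (hf : DifferentiableAt ℝ f x) (y : E) :
    ⟪∇ f x, y - x⟫ + ℓ / 2 * ‖y - x‖ ^ 2 ≤ f y - f x := by
  have hd := (hasGradientAt_iff_hasFDerivAt.mp hf.hasGradientAt).sub
    ((hasStrictFDerivAt_norm_sq x).hasFDerivAt.const_mul (ℓ / 2))
  have hconv := (strongConvexOn_iff_convex.mp hstrong).le_sub_of_hasFDerivAt hd y
  simp only [sub_apply, smul_apply, toDual_apply_apply, coe_innerSL_apply, smul_eq_mul,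
    nsmul_eq_mul, Nat.cast_ofNat] at hconv
  have hy : ‖y‖ ^ 2 = ‖x‖ ^ 2 + 2 * ⟪x, y - x⟫ + ‖y - x‖ ^ 2 := by
    rw [← norm_add_sq_real, add_sub_cancel]
  rw [hy] at hconv
  linarith

lemma hasDerivAt_comp_add_smul (hf : Differentiable ℝ f) (z v : E) (t : ℝ) :
    HasDerivAt (fun s : ℝ => f (z + s • v)) ⟪∇ f (z + t • v), v⟫ t := by
  have hline : HasDerivAt (fun s : ℝ => z + s • v) v t := by
    simpa using ((hasDerivAt_id t).smul_const v).const_add z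
  exact (hasGradientAt_iff_hasFDerivAt.mp (hf _).hasGradientAt).comp_hasDerivAt t hline

lemma image_add_le_of_lipschitz_gradient {L : ℝ} (hf : Differentiable ℝ f)
    (hsmooth : ∀ x y, ‖∇ f x - ∇ f y‖ ≤ L * ‖x - y‖) (z v : E) :
    f (z + v) ≤ f z + ⟪∇ f z, v⟫ + L / 2 * ‖v‖ ^ 2 := by
  set u : ℝ → ℝ := fun t => f (z + t • v) - t * ⟪∇ f z, v⟫ - L / 2 * t ^ 2 * ‖v‖ ^ 2
  have hu : ∀ t, HasDerivAt u (⟪∇ f (z + t • v), v⟫ - ⟪∇ f z, v⟫ - L * t * ‖v‖ ^ 2) t := by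
    intro t
    have hsq := ((hasDerivAt_pow 2 t).const_mul (L / 2)).mul_const (‖v‖ ^ 2)
    refine (((hasDerivAt_comp_add_smul hf z v t).sub
      ((hasDerivAt_id t).mul_const ⟪∇ f z, v⟫)).sub hsq).congr_deriv ?_
    simp only [Nat.cast_ofNat, Nat.add_one_sub_one, pow_one, one_mul]
    ring
  have hu' : ∀ t ∈ interior (Ici (0 : ℝ)),
      ⟪∇ f (z + t • v), v⟫ - ⟪∇ f z, v⟫ - L * t * ‖v‖ ^ 2 ≤ 0 := by
    intro t ht
    rw [interior_Ici, mem_Ioi] at ht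
    have : ⟪∇ f (z + t • v) - ∇ f z, v⟫ ≤ L * t * ‖v‖ ^ 2 :=
      calc ⟪∇ f (z + t • v) - ∇ f z, v⟫ ≤ ‖∇ f (z + t • v) - ∇ f z‖ * ‖v‖ := real_inner_le_norm _ _
        _ ≤ L * ‖z + t • v - z‖ * ‖v‖ := by gcongr; exact hsmooth _ _
        _ = L * t * ‖v‖ ^ 2 := by
          rw [add_sub_cancel_left, norm_smul, Real.norm_of_nonneg ht.le]; ring
    rw [inner_sub_left] at this
    linarith
  have hanti := antitoneOn_of_hasDerivWithinAt_nonpos (convex_Ici 0)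
    (HasDerivAt.continuousOn fun t _ => hu t) (fun t _ => (hu t).hasDerivWithinAt) hu'
  have := hanti self_mem_Ici (mem_Ici.mpr zero_le_one) zero_le_one
  simp only [u, one_smul, zero_smul, add_zero] at this
  linarith

lemma StrongConvexOn.two_mul_sub_le_norm_gradient_sq {ℓ : ℝ} (hstrong : StrongConvexOn univ ℓ f)
    {xstar : E} (hmin : IsMinOn f univ xstar) {x : E} (hf : DifferentiableAt ℝ f x) :
    2 * ℓ * (f x - f xstar) ≤ ‖∇ f x‖ ^ 2 := by
  have hgap : 0 ≤ f x - f xstar := sub_nonneg.mpr (hmin (mem_univ x))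
  rcases le_or_gt ℓ 0 with hℓ | hℓ
  · nlinarith [sq_nonneg ‖∇ f x‖]
  have hlow := hstrong.inner_gradient_add_le hf xstar
  have hcs := neg_le_of_abs_le (abs_real_inner_le_norm (∇ f x) (xstar - x))
  have hgap_le : f x - f xstar ≤ ‖∇ f x‖ * ‖xstar - x‖ - ℓ / 2 * ‖xstar - x‖ ^ 2 := by linarith
  nlinarith [mul_le_mul_of_nonneg_left hgap_le (by positivity : (0 : ℝ) ≤ 2 * ℓ),
    sq_nonneg (ℓ * ‖xstar - x‖ - ‖∇ f x‖)]

lemma norm_gradient_sq_le_of_lipschitz_gradient {L : ℝ} (hL : 0 < L) (hf : Differentiable ℝ f)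
    (hsmooth : ∀ x y, ‖∇ f x - ∇ f y‖ ≤ L * ‖x - y‖) {xstar : E} (hmin : IsMinOn f univ xstar)
    (x : E) : ‖∇ f x‖ ^ 2 ≤ 2 * L * (f x - f xstar) := by
  have hstep : f xstar ≤ f x - ‖∇ f x‖ ^ 2 / (2 * L) :=
    calc f xstar ≤ f (x + -(1 / L) • ∇ f x) := hmin (mem_univ _)
      _ ≤ f x + ⟪∇ f x, -(1 / L) • ∇ f x⟫ + L / 2 * ‖-(1 / L) • ∇ f x‖ ^ 2 :=
        image_add_le_of_lipschitz_gradient hf hsmooth x _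
      _ = f x - ‖∇ f x‖ ^ 2 / (2 * L) := by
        rw [real_inner_smul_right, real_inner_self_eq_norm_sq, norm_smul, norm_neg,
          Real.norm_of_nonneg (one_div_pos.mpr hL).le]
        field_simp
        ring
  have := (div_le_iff₀ (by positivity : (0 : ℝ) < 2 * L)).mp
    (show ‖∇ f x‖ ^ 2 / (2 * L) ≤ f x - f xstar by linarith)
  linarith

lemma image_sub_smul_le_of_lipschitz_gradient {L γ : ℝ} (hf : Differentiable ℝ f)
    (hsmooth : ∀ x y, ‖∇ f x - ∇ f y‖ ≤ L * ‖x - y‖) (hγ : 0 ≤ γ) (hγL : γ * L ≤ 1) (x h : E) :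
    f (x - γ • h) ≤ f x - γ / 2 * ‖∇ f x‖ ^ 2 + γ / 2 * ‖∇ f x - h‖ ^ 2 :=
  calc f (x - γ • h) ≤ f x + ⟪∇ f x, -(γ • h)⟫ + L / 2 * ‖-(γ • h)‖ ^ 2 := by
        simpa only [sub_eq_add_neg] using image_add_le_of_lipschitz_gradient hf hsmooth x _
    _ = f x - γ * ⟪∇ f x, h⟫ + γ * L / 2 * (γ * ‖h‖ ^ 2) := by
        rw [inner_neg_right, real_inner_smul_right, norm_neg, norm_smul, Real.norm_of_nonneg hγ]
        ring
    _ ≤ f x - γ * ⟪∇ f x, h⟫ + 1 / 2 * (γ * ‖h‖ ^ 2) := by gcongr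
    _ = f x - γ / 2 * ‖∇ f x‖ ^ 2 + γ / 2 * ‖∇ f x - h‖ ^ 2 := by
        rw [norm_sub_sq_real]
        ring

end InnerProductSpace

theorem stmt_2_general (n : ℕ) (f : EuclideanSpace ℝ (Fin n) → ℝ) (L ℓ : ℝ)
    (hdiff : Differentiable ℝ f)
    (hsmooth : ∀ x y, ‖gradient f x - gradient f y‖ ≤ L * ‖x - y‖)
    (hstrong : StrongConvexOn Set.univ ℓ f)
    (xstar : EuclideanSpace ℝ (Fin n)) (hmin : IsMinOn f Set.univ xstar)
    (γ r : ℝ) (hγ0 : 0 < γ) (hγ : γ ≤ 1 / L)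
    (x h : EuclideanSpace ℝ (Fin n))
    (herr : ‖gradient f x - h‖ ≤ (r / (1 - r)) * ‖gradient f x‖) :
    f (x - γ • h) - f xstar
      ≤ (1 + γ * L * (r / (1 - r)) ^ 2 - γ * ℓ) * (f x - f xstar) := by
  have hL : 0 < L := one_div_pos.mp (hγ0.trans_le hγ)
  have hstep := image_sub_smul_le_of_lipschitz_gradient hdiff hsmooth hγ0.le
    ((le_div_iff₀ hL).mp hγ) x h
  have hPL := hstrong.two_mul_sub_le_norm_gradient_sq hmin (hdiff x)
  have hupper := norm_gradient_sq_le_of_lipschitz_gradient hL hdiff hsmooth hmin x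
  have herr_sq : ‖∇ f x - h‖ ^ 2 ≤ (r / (1 - r)) ^ 2 * ‖∇ f x‖ ^ 2 := by
    rw [← mul_pow]
    exact pow_le_pow_left₀ (norm_nonneg _) herr 2
  linarith [mul_le_mul_of_nonneg_left hPL (by positivity : (0 : ℝ) ≤ γ / 2),
    mul_le_mul_of_nonneg_left hupper (by positivity : (0 : ℝ) ≤ γ / 2 * (r / (1 - r)) ^ 2),
    mul_le_mul_of_nonneg_left herr_sq (by positivity : (0 : ℝ) ≤ γ / 2)]

/-- contraction under relative gradient error (Lemma 1 step). -/
theorem stmt_2 (n : ℕ) (f : EuclideanSpace ℝ (Fin n) → ℝ) (L ℓ : ℝ)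
    (hL : 0 < L) (hℓ : 0 < ℓ)
    (hdiff : Differentiable ℝ f)
    (hsmooth : ∀ x y, ‖gradient f x - gradient f y‖ ≤ L * ‖x - y‖)
    (hstrong : StrongConvexOn Set.univ ℓ f)
    (xstar : EuclideanSpace ℝ (Fin n)) (hmin : IsMinOn f Set.univ xstar)
    (γ r : ℝ) (hγ0 : 0 < γ) (hγ : γ ≤ 1 / L) (hr : r ∈ Set.Ioo (0 : ℝ) 1)
    (x h : EuclideanSpace ℝ (Fin n))
    (herr : ‖gradient f x - h‖ ≤ (r / (1 - r)) * ‖gradient f x‖) :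
    f (x - γ • h) - f xstar
      ≤ (1 + γ * L * (r / (1 - r)) ^ 2 - γ * ℓ) * (f x - f xstar) :=
  stmt_2_general n f L ℓ hdiff hsmooth hstrong xstar hmin γ r hγ0 hγ x h herr
end

section
/- Let f : R^n → R be L-smooth and ℓ-strongly convex with minimizer x⋆, 0 < γ ≤ 1/L, and δ ≥ 0. Suppose x⁺ = x − γh where ‖∇f(x) − h‖ ≤ δ. Then f(x⁺) − f(x⋆) ≤ (1 − γℓ)(f(x) − f(x⋆)) + γδ²/2. -/
/-!
The descent lemma for an `L`-smooth `f` with `γ L ≤ 1`, together with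
`2⟪∇f x, h⟫ = ‖∇f x‖² + ‖h‖² - ‖∇f x - h‖²`, gives
`f (x - γ h) ≤ f x - γ/2 ‖∇f x‖² + γ/2 ‖∇f x - h‖²`. Strong convexity yields the
Polyak–Łojasiewicz inequality `2ℓ (f x - f y) ≤ ‖∇f x‖²` (minimize the quadratic lower bound
at `x` over `y`), which turns the gradient term into the contraction factor `1 - γℓ`.
-/

open InnerProductSpace Set

theorem le_add_deriv_add_of_deriv_le_add_mul {φ φ' : ℝ → ℝ} {C : ℝ}
    (hφ : ∀ t, HasDerivAt φ (φ' t) t) (hφ' : ∀ t ∈ Ioo (0 : ℝ) 1, φ' t ≤ φ' 0 + C * t) :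
    φ 1 ≤ φ 0 + φ' 0 + C / 2 := by
  let ψ : ℝ → ℝ := fun t ↦ φ t - t * φ' 0 - C / 2 * t ^ 2
  have hψ : ∀ t, HasDerivAt ψ (φ' t - φ' 0 - C * t) t := fun t ↦
    (((hφ t).sub ((hasDerivAt_id t).mul_const (φ' 0))).sub
      ((hasDerivAt_pow 2 t).const_mul (C / 2))).congr_deriv (by simp only [Nat.cast_ofNat, one_mul]; ring)
  have hanti : AntitoneOn ψ (Icc 0 1) := by
    refine antitoneOn_of_deriv_nonpos (convex_Icc 0 1)
      (fun t _ ↦ (hψ t).continuousAt.continuousWithinAt)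
      (fun t _ ↦ (hψ t).differentiableAt.differentiableWithinAt) fun t ht ↦ ?_
    rw [interior_Icc] at ht
    rw [(hψ t).deriv]
    linarith [hφ' t ht]
  have := hanti (left_mem_Icc.mpr zero_le_one) (right_mem_Icc.mpr zero_le_one) zero_le_one
  simp only [ψ] at this
  linarith

theorem ConvexOn.apply_add_fderiv_le {E : Type*} [NormedAddCommGroup E] [NormedSpace ℝ E]
    {g : E → ℝ} {g' : E →L[ℝ] ℝ} {x : E} (hg : ConvexOn ℝ univ g) (hg' : HasFDerivAt g g' x)
    (y : E) : g x + g' (y - x) ≤ g y := by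
  have hline : ConvexOn ℝ univ (g ∘ AffineMap.lineMap (k := ℝ) x y) := hg.comp_affineMap _
  have hderiv : HasDerivAt (g ∘ AffineMap.lineMap (k := ℝ) x y) (g' (y - x)) 0 :=
    (AffineMap.lineMap_apply_zero (k := ℝ) x y ▸ hg').comp_hasDerivAt (0 : ℝ)
      AffineMap.hasDerivAt_lineMap
  have := hline.le_slope_of_hasDerivAt (mem_univ 0) (mem_univ 1) zero_lt_one hderiv
  simp only [slope, Function.comp_apply, AffineMap.lineMap_apply_one,
    AffineMap.lineMap_apply_zero, vsub_eq_sub, sub_zero, inv_one, one_smul] at this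
  linarith

variable {E : Type*} [NormedAddCommGroup E] [InnerProductSpace ℝ E] [CompleteSpace E]
  {f : E → ℝ}

theorem StrongConvexOn.apply_add_inner_gradient_le {ℓ : ℝ} {x : E}
    (hf : StrongConvexOn univ ℓ f) (hx : DifferentiableAt ℝ f x) (y : E) :
    f x + ⟪gradient f x, y - x⟫_ℝ + ℓ / 2 * ‖y - x‖ ^ 2 ≤ f y := by
  have hg := hx.hasGradientAt.hasFDerivAt.sub
    ((hasStrictFDerivAt_norm_sq x).hasFDerivAt.const_mul (ℓ / 2))
  have hconv := (strongConvexOn_iff_convex.mp hf).apply_add_fderiv_le hg y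
  simp only [sub_apply, smul_apply, toDual_apply_apply, coe_innerSL_apply, nsmul_eq_mul,
    Nat.cast_ofNat, smul_eq_mul] at hconv
  have hsq : ‖y‖ ^ 2 = ‖x‖ ^ 2 + 2 * ⟪x, y - x⟫_ℝ + ‖y - x‖ ^ 2 := by
    conv_lhs => rw [← add_sub_cancel x y]
    rw [norm_add_sq_real]
  rw [hsq] at hconv
  linarith

theorem apply_add_le_of_lipschitz_gradient {L : ℝ} (hf : Differentiable ℝ f)
    (hL : ∀ x y, ‖gradient f x - gradient f y‖ ≤ L * ‖x - y‖) (x v : E) :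
    f (x + v) ≤ f x + ⟪gradient f x, v⟫_ℝ + L / 2 * ‖v‖ ^ 2 := by
  have hline : ∀ t : ℝ, HasDerivAt (fun s ↦ f (x + s • v)) ⟪gradient f (x + t • v), v⟫_ℝ t :=
    fun t ↦ (hf _).hasGradientAt.hasFDerivAt.comp_hasDerivAt t
      (by simpa using ((hasDerivAt_id t).smul_const v).const_add x)
  have := le_add_deriv_add_of_deriv_le_add_mul (C := L * ‖v‖ ^ 2) hline fun t ht ↦
    calc ⟪gradient f (x + t • v), v⟫_ℝ
        = ⟪gradient f (x + (0 : ℝ) • v), v⟫_ℝ + ⟪gradient f (x + t • v) - gradient f x, v⟫_ℝ := by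
          rw [zero_smul, add_zero, inner_sub_left, add_sub_cancel]
      _ ≤ ⟪gradient f (x + (0 : ℝ) • v), v⟫_ℝ + ‖gradient f (x + t • v) - gradient f x‖ * ‖v‖ := by
          gcongr; exact real_inner_le_norm _ _
      _ ≤ ⟪gradient f (x + (0 : ℝ) • v), v⟫_ℝ + L * ‖t • v‖ * ‖v‖ := by
          gcongr; simpa using hL (x + t • v) x
      _ = ⟪gradient f (x + (0 : ℝ) • v), v⟫_ℝ + L * ‖v‖ ^ 2 * t := by
          rw [norm_smul, Real.norm_of_nonneg ht.1.le]; ring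
  simp only [one_smul, zero_smul, add_zero] at this
  linarith

theorem StrongConvexOn.mul_sub_le_norm_gradient_sq {ℓ : ℝ} {x : E}
    (hf : StrongConvexOn univ ℓ f) (hℓ : 0 ≤ ℓ) (hx : DifferentiableAt ℝ f x) (y : E) :
    2 * ℓ * (f x - f y) ≤ ‖gradient f x‖ ^ 2 := by
  have hlower := hf.apply_add_inner_gradient_le hx y
  have hsq : 0 ≤ ‖ℓ • (y - x) + gradient f x‖ ^ 2 := sq_nonneg _
  rw [norm_add_sq_real, real_inner_smul_left, norm_smul, Real.norm_of_nonneg hℓ,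
    real_inner_comm] at hsq
  nlinarith [mul_le_mul_of_nonneg_left hlower (by positivity : 0 ≤ 2 * ℓ)]

theorem apply_sub_smul_le_of_lipschitz_gradient {L γ : ℝ} (hf : Differentiable ℝ f)
    (hL : ∀ x y, ‖gradient f x - gradient f y‖ ≤ L * ‖x - y‖) (hγ : 0 ≤ γ) (hγL : γ * L ≤ 1)
    (x h : E) :
    f (x - γ • h) ≤ f x - γ / 2 * ‖gradient f x‖ ^ 2 + γ / 2 * ‖gradient f x - h‖ ^ 2 := by
  have hdesc := apply_add_le_of_lipschitz_gradient hf hL x (-(γ • h))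
  rw [← sub_eq_add_neg, inner_neg_right, real_inner_smul_right, norm_neg, norm_smul,
    Real.norm_of_nonneg hγ] at hdesc
  have hquad : L / 2 * (γ * ‖h‖) ^ 2 ≤ γ / 2 * ‖h‖ ^ 2 := by
    nlinarith [mul_le_mul_of_nonneg_left hγL (by positivity : 0 ≤ γ * ‖h‖ ^ 2)]
  rw [norm_sub_sq_real]
  linarith

theorem stmt_3_general (n : ℕ) (f : EuclideanSpace ℝ (Fin n) → ℝ) (L ℓ : ℝ)
    (hL : 0 < L) (hℓ : 0 < ℓ)
    (hdiff : Differentiable ℝ f)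
    (hsmooth : ∀ x y, ‖gradient f x - gradient f y‖ ≤ L * ‖x - y‖)
    (hstrong : StrongConvexOn Set.univ ℓ f)
    (xstar : EuclideanSpace ℝ (Fin n))
    (γ δ : ℝ) (hγ0 : 0 < γ) (hγ : γ ≤ 1 / L)
    (x h : EuclideanSpace ℝ (Fin n))
    (herr : ‖gradient f x - h‖ ≤ δ) :
    f (x - γ • h) - f xstar
      ≤ (1 - γ * ℓ) * (f x - f xstar) + γ * δ ^ 2 / 2 := by
  have hγL : γ * L ≤ 1 := by rwa [le_div_iff₀ hL] at hγ
  have hstep := apply_sub_smul_le_of_lipschitz_gradient hdiff hsmooth hγ0.le hγL x h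
  have hPL := hstrong.mul_sub_le_norm_gradient_sq hℓ.le (hdiff x) xstar
  have herr_sq : ‖gradient f x - h‖ ^ 2 ≤ δ ^ 2 := pow_le_pow_left₀ (norm_nonneg _) herr 2
  have hγ2 : 0 ≤ γ / 2 := by positivity
  linarith [mul_le_mul_of_nonneg_left hPL hγ2, mul_le_mul_of_nonneg_left herr_sq hγ2]

/-- contraction under absolute gradient error (Lemma 2 step). -/
theorem stmt_3 (n : ℕ) (f : EuclideanSpace ℝ (Fin n) → ℝ) (L ℓ : ℝ)
    (hL : 0 < L) (hℓ : 0 < ℓ)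
    (hdiff : Differentiable ℝ f)
    (hsmooth : ∀ x y, ‖gradient f x - gradient f y‖ ≤ L * ‖x - y‖)
    (hstrong : StrongConvexOn Set.univ ℓ f)
    (xstar : EuclideanSpace ℝ (Fin n)) (hmin : IsMinOn f Set.univ xstar)
    (γ δ : ℝ) (hγ0 : 0 < γ) (hγ : γ ≤ 1 / L) (hδ : 0 ≤ δ)
    (x h : EuclideanSpace ℝ (Fin n))
    (herr : ‖gradient f x - h‖ ≤ δ) :
    f (x - γ • h) - f xstar
      ≤ (1 - γ * ℓ) * (f x - f xstar) + γ * δ ^ 2 / 2 :=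
  stmt_3_general n f L ℓ hL hℓ hdiff hsmooth hstrong xstar γ δ hγ0 hγ x h herr
end

section
/- Let f : R^n → R be ℓ-strongly convex and L-smooth with minimizer x⋆, let 0 < γ ≤ 1/L, r ∈ (0, √ℓ/(√L+√ℓ)), r̄ = r/(1−r), and q = 1 + γL r̄² − γℓ. Suppose the sequence x^(k) satisfies, for every k, either (a) f(x^(k+1)) − f(x⋆) ≤ q (f(x^(k)) − f(x⋆)) or (b) f(x^(k+1)) − f(x⋆) ≤ (1 − γℓ)(f(x^(k)) − f(x⋆)) + γε²N²/2. Then limsup_{k→∞} (f(x^(k)) − f(x⋆)) ≤ ε²N²/(2(ℓ − L r̄²)). -/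
open Filter

/-- Proposition 1, Part 1 (unified two-state convergence). -/
theorem stmt_16 (n : ℕ) (f : EuclideanSpace ℝ (Fin n) → ℝ) (L ℓ : ℝ)
    (hL : 0 < L) (hℓ : 0 < ℓ) (hℓL : ℓ ≤ L)
    (hdiff : Differentiable ℝ f)
    (hsmooth : ∀ x y, ‖gradient f x - gradient f y‖ ≤ L * ‖x - y‖)
    (hstrong : StrongConvexOn Set.univ ℓ f)
    (xstar : EuclideanSpace ℝ (Fin n)) (hmin : IsMinOn f Set.univ xstar)
    (γ r ε : ℝ) (N : ℕ) (hγ0 : 0 < γ) (hγ : γ ≤ 1 / L) (hε : 0 ≤ ε)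
    (hr : r ∈ Set.Ioo (0 : ℝ) (Real.sqrt ℓ / (Real.sqrt L + Real.sqrt ℓ)))
    (x : ℕ → EuclideanSpace ℝ (Fin n))
    (hstep : ∀ k,
      f (x (k + 1)) - f xstar
          ≤ (1 + γ * L * (r / (1 - r)) ^ 2 - γ * ℓ) * (f (x k) - f xstar) ∨
        f (x (k + 1)) - f xstar
          ≤ (1 - γ * ℓ) * (f (x k) - f xstar) + γ * ε ^ 2 * (N : ℝ) ^ 2 / 2) :
    Filter.atTop.limsup (fun k => f (x k) - f xstar)
      ≤ ε ^ 2 * (N : ℝ) ^ 2 / (2 * (ℓ - L * (r / (1 - r)) ^ 2)) := by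
  obtain ⟨hr0, hrlt⟩ := hr
  have hsL : 0 < Real.sqrt L := Real.sqrt_pos.2 hL
  have hsl : 0 < Real.sqrt ℓ := Real.sqrt_pos.2 hℓ
  have hden : 0 < Real.sqrt L + Real.sqrt ℓ := by positivity
  have hr1 : r < 1 := lt_of_lt_of_le hrlt (by rw [div_le_one hden]; linarith)
  have h1r : 0 < 1 - r := by linarith
  set a : ℕ → ℝ := fun k => f (x k) - f xstar with ha
  set q : ℝ := 1 + γ * L * (r / (1 - r)) ^ 2 - γ * ℓ with hqdef
  set c : ℝ := γ * ε ^ 2 * (N : ℝ) ^ 2 / 2 with hcdef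
  have hkey : L * (r / (1 - r)) ^ 2 < ℓ := by
    have h2 : r * (Real.sqrt L + Real.sqrt ℓ) < Real.sqrt ℓ := (lt_div_iff₀ hden).1 hrlt
    have h3 : r * Real.sqrt L < Real.sqrt ℓ * (1 - r) := by nlinarith
    have h4 : r / (1 - r) < Real.sqrt ℓ / Real.sqrt L := by
      rw [div_lt_div_iff₀ h1r hsL]; linarith
    have h5 : (r / (1 - r)) ^ 2 < (Real.sqrt ℓ / Real.sqrt L) ^ 2 :=
      pow_lt_pow_left₀ h4 (by positivity) two_ne_zero
    have h6 : (Real.sqrt ℓ / Real.sqrt L) ^ 2 = ℓ / L := by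
      rw [div_pow, Real.sq_sqrt hℓ.le, Real.sq_sqrt hL.le]
    rw [h6] at h5
    calc L * (r / (1 - r)) ^ 2 < L * (ℓ / L) := by
          exact mul_lt_mul_of_pos_left h5 hL
      _ = ℓ := by field_simp
  have hq1 : q < 1 := by
    have := mul_lt_mul_of_pos_left hkey hγ0
    rw [hqdef]; nlinarith
  have hγL : γ * L ≤ 1 := by
    rw [le_div_iff₀ hL] at hγ; linarith
  have hq0 : 0 ≤ q := by
    have h7 : 0 ≤ γ * L * (r / (1 - r)) ^ 2 := by positivity
    rw [hqdef]; nlinarith [mul_le_mul_of_nonneg_left hℓL hγ0.le]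
  have hc0 : 0 ≤ c := by rw [hcdef]; positivity
  have h1q : 0 < 1 - q := by linarith
  set M : ℝ := c / (1 - q) with hMdef
  have hM0 : 0 ≤ M := by positivity
  have hMeq : M * (1 - q) = c := div_mul_cancel₀ c (by linarith)
  have ha0 : ∀ k, 0 ≤ a k := fun k => sub_nonneg.2 (hmin (Set.mem_univ _))
  have hstep' : ∀ k, a (k + 1) ≤ q * a k + c := by
    intro k
    rcases hstep k with h | h
    · calc a (k + 1) ≤ q * a k := h
        _ ≤ q * a k + c := by linarith
    · have h8 : (1 - γ * ℓ) * a k ≤ q * a k := by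
        apply mul_le_mul_of_nonneg_right _ (ha0 k)
        rw [hqdef]; nlinarith [mul_nonneg (mul_nonneg hγ0.le hL.le) (sq_nonneg (r / (1 - r)))]
      calc a (k + 1) ≤ (1 - γ * ℓ) * a k + c := h
        _ ≤ q * a k + c := by linarith
  have hbound : ∀ k, a k ≤ q ^ k * a 0 + M := by
    intro k
    induction k with
    | zero => simp; nlinarith [ha0 0]
    | succ k ih =>
      calc a (k + 1) ≤ q * a k + c := hstep' k
        _ ≤ q * (q ^ k * a 0 + M) + c := by
              have h9 := mul_le_mul_of_nonneg_left ih hq0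
              linarith
        _ = q ^ (k + 1) * a 0 + (q * M + c) := by ring
        _ = q ^ (k + 1) * a 0 + M := by linear_combination -hMeq
  have htend : Tendsto (fun k => q ^ k * a 0 + M) atTop (nhds M) := by
    have hp : Tendsto (fun k : ℕ => q ^ k) atTop (nhds 0) :=
      tendsto_pow_atTop_nhds_zero_of_lt_one hq0 hq1
    have := (hp.mul_const (a 0)).add_const M
    simpa using this
  have hlb : IsBoundedUnder (· ≥ ·) atTop a :=
    Filter.isBoundedUnder_of ⟨0, ha0⟩
  have hcb : IsCoboundedUnder (· ≤ ·) atTop a := hlb.isCoboundedUnder_le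
  have hbd : IsBoundedUnder (· ≤ ·) atTop (fun k => q ^ k * a 0 + M) :=
    htend.isBoundedUnder_le
  have hfin : atTop.limsup a ≤ M := by
    calc atTop.limsup a ≤ atTop.limsup (fun k => q ^ k * a 0 + M) :=
          limsup_le_limsup (Eventually.of_forall hbound) hcb hbd
      _ = M := htend.limsup_eq
  have hMval : M = ε ^ 2 * (N : ℝ) ^ 2 / (2 * (ℓ - L * (r / (1 - r)) ^ 2)) := by
    have h2ne : (2 : ℝ) * (ℓ - L * (r / (1 - r)) ^ 2) ≠ 0 := ne_of_gt (by linarith)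
    rw [hMdef, hcdef, div_eq_div_iff (ne_of_gt h1q) h2ne, hqdef]
    ring
  rw [← hMval]
  exact hfin
end
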